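/- arXiv:1912.10033 — 5 statements merged into one kernel-verified Lean document; each statement's English description precedes it below -/
import Mathlib

section
/- Let α₁, α₂ ∈ ℂ[x] be polynomials with α₂ ≠ 0 and deg α₁ > deg α₂, and let a₁, a₂ ∈ ℂ(x) be nonzero rational functions whose ratio a₂/a₁ is a (nonzero) complex constant. Define G_n = a₁·α₁ⁿ + a₂·α₂ⁿ ∈ ℂ(x) for n ≥ 0. Then there exists a constant C, depending only on α₁, α₂, a₁, a₂, such that for all n > C there is no integer m ≥ 2 and no polynomial h ∈ ℂ[x] with deg h ≥ 2 satisfying G_n = h^m (as elements of ℂ(x)). -/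
open Polynomial

private lemma sum_rootMult_le {T : Finset ℂ} {P : Polynomial ℂ} :
    ∑ z ∈ T, P.rootMultiplicity z ≤ P.natDegree := by
  classical
  have h1 : ∀ z, P.rootMultiplicity z = P.roots.count z := fun z => (Polynomial.count_roots P).symm
  simp only [h1]
  have h2 : ∑ z ∈ T ∩ P.roots.toFinset, P.roots.count z = ∑ z ∈ T, P.roots.count z := by
    apply Finset.sum_subset Finset.inter_subset_left
    intro x hx hnx
    rw [Multiset.count_eq_zero]
    intro hmem
    exact hnx (Finset.mem_inter.mpr ⟨hx, Multiset.mem_toFinset.mpr hmem⟩)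
  rw [← h2]
  calc ∑ z ∈ T ∩ P.roots.toFinset, P.roots.count z
      ≤ ∑ z ∈ P.roots.toFinset, P.roots.count z :=
        Finset.sum_le_sum_of_subset Finset.inter_subset_right
    _ = Multiset.card P.roots := Multiset.toFinset_sum_count_eq _
    _ ≤ P.natDegree := Polynomial.card_roots' P

private lemma rootMult_pow (z : ℂ) (P : Polynomial ℂ) (hP : P ≠ 0) (n : ℕ) :
    (P ^ n).rootMultiplicity z = n * P.rootMultiplicity z := by
  induction n with
  | zero => simp
  | succ k ih =>
      rw [pow_succ, Polynomial.rootMultiplicity_mul (mul_ne_zero (pow_ne_zero _ hP) hP), ih]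
      ring

private lemma natDegree_sum_eq (P : Polynomial ℂ) :
    P.natDegree = ∑ z ∈ P.roots.toFinset, P.rootMultiplicity z := by
  classical
  have h1 : P.roots.card = P.natDegree :=
    Polynomial.splits_iff_card_roots.mp (IsAlgClosed.splits P)
  rw [← h1, ← Multiset.toFinset_sum_count_eq]
  exact Finset.sum_congr rfl fun z _ => (Polynomial.count_roots P)

private lemma isCoprime_of_isUnit_right {R : Type*} [CommSemiring R] {x y : R} (hu : IsUnit y) :
    IsCoprime x y := by
  obtain ⟨u, rfl⟩ := hu
  exact ⟨0, ↑u⁻¹, by simp⟩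

/-- **Theorem 1 (binary case), index-bound form.**
Let `α₁ α₂ ∈ ℂ[x]` with `α₂ ≠ 0` and `deg α₁ > deg α₂`, and let `a₁ a₂ ∈ ℂ(x)` be nonzero
with `a₂ / a₁` a nonzero complex constant. Set `G n = a₁·α₁^n + a₂·α₂^n ∈ ℂ(x)`.
Then there is a constant `C` (depending only on the data) such that for `n > C`
no `m ≥ 2` and no polynomial `h` with `deg h ≥ 2` satisfy `G n = h^m`. -/
theorem stmt0 (α₁ α₂ : Polynomial ℂ) (hα₂ : α₂ ≠ 0)
    (hdeg : α₂.natDegree < α₁.natDegree)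
    (a₁ a₂ : RatFunc ℂ) (ha₁ : a₁ ≠ 0) (ha₂ : a₂ ≠ 0)
    (c : ℂ) (hc : c ≠ 0) (hratio : a₂ / a₁ = RatFunc.C c) :
    ∃ C : ℕ, ∀ n : ℕ, C < n → ∀ m : ℕ, 2 ≤ m → ∀ h : Polynomial ℂ, 2 ≤ h.natDegree →
      a₁ * (algebraMap (Polynomial ℂ) (RatFunc ℂ) α₁) ^ n +
        a₂ * (algebraMap (Polynomial ℂ) (RatFunc ℂ) α₂) ^ n ≠
      (algebraMap (Polynomial ℂ) (RatFunc ℂ) h) ^ m := by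
  classical
  have hα₁ : α₁ ≠ 0 := by
    intro h0
    rw [h0, Polynomial.natDegree_zero] at hdeg
    omega
  -- extract the gcd
  obtain ⟨β₁, β₂, e₁, e₂, hu⟩ := extract_gcd α₁ α₂
  set g : Polynomial ℂ := gcd α₁ α₂ with hg
  have hgne : g ≠ 0 := fun h0 => hα₂ (by rw [e₂, h0, zero_mul])
  have hβ₁ : β₁ ≠ 0 := fun h0 => hα₁ (by rw [e₁, h0, mul_zero])
  have hβ₂ : β₂ ≠ 0 := fun h0 => hα₂ (by rw [e₂, h0, mul_zero])
  have hcop : IsCoprime β₁ β₂ := (gcd_isUnit_iff β₁ β₂).mp hu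
  have hd₁ : α₁.natDegree = g.natDegree + β₁.natDegree := by
    rw [e₁, Polynomial.natDegree_mul hgne hβ₁]
  have hd₂ : α₂.natDegree = g.natDegree + β₂.natDegree := by
    rw [e₂, Polynomial.natDegree_mul hgne hβ₂]
  have hβdeg : β₂.natDegree < β₁.natDegree := by omega
  have hβ₁pos : 1 ≤ β₁.natDegree := by omega
  -- the Wronskian
  set W : Polynomial ℂ := derivative β₁ * β₂ - β₁ * derivative β₂ with hWdef
  have hW : W ≠ 0 := by
    intro h0
    have hdvd : β₁ ∣ derivative β₁ * β₂ := by
      rw [sub_eq_zero] at h0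
      exact ⟨derivative β₂, h0⟩
    have hdvd' : β₁ ∣ derivative β₁ := hcop.dvd_of_dvd_mul_right hdvd
    have hder : derivative β₁ ≠ 0 := by
      intro hz
      have := Polynomial.natDegree_eq_zero_of_derivative_eq_zero hz
      omega
    have h1 := Polynomial.natDegree_le_of_dvd hdvd' hder
    have h2 := Polynomial.natDegree_derivative_lt (p := β₁) (by omega)
    omega
  set p : Polynomial ℂ := a₁.num with hp
  set q : Polynomial ℂ := a₁.denom with hqd
  have hpne : p ≠ 0 := RatFunc.num_ne_zero ha₁
  have hqne : q ≠ 0 := RatFunc.denom_ne_zero a₁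
  refine ⟨2 * W.natDegree + p.natDegree + q.natDegree + g.natDegree, ?_⟩
  intro n hn m hm h hh Heq
  have hhne : h ≠ 0 := by
    intro h0; rw [h0, Polynomial.natDegree_zero] at hh; omega
  obtain ⟨n', rfl⟩ : ∃ n', n = n' + 1 := ⟨n - 1, by omega⟩
  -- from the RatFunc equation to a polynomial equation
  have ha2 : a₂ = RatFunc.C c * a₁ := by
    rw [div_eq_iff ha₁] at hratio; exact hratio
  have hq0 : algebraMap (Polynomial ℂ) (RatFunc ℂ) q ≠ 0 :=
    RatFunc.algebraMap_ne_zero hqne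
  have ha₁eq : algebraMap (Polynomial ℂ) (RatFunc ℂ) p
      = a₁ * algebraMap (Polynomial ℂ) (RatFunc ℂ) q := by
    rw [hp, hqd]
    exact (div_eq_iff (RatFunc.algebraMap_ne_zero (RatFunc.denom_ne_zero a₁))).mp
      (RatFunc.num_div_denom a₁)
  have hpoly : p * (α₁ ^ (n' + 1) + Polynomial.C c * α₂ ^ (n' + 1)) = q * h ^ m := by
    apply RatFunc.algebraMap_injective ℂ
    simp only [map_mul, map_add, map_pow, RatFunc.algebraMap_C]
    linear_combination (algebraMap (Polynomial ℂ) (RatFunc ℂ) q) * Heq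
      + ((algebraMap (Polynomial ℂ) (RatFunc ℂ) α₁) ^ (n' + 1)
          + RatFunc.C c * (algebraMap (Polynomial ℂ) (RatFunc ℂ) α₂) ^ (n' + 1)) * ha₁eq
      - ((algebraMap (Polynomial ℂ) (RatFunc ℂ) q)
          * (algebraMap (Polynomial ℂ) (RatFunc ℂ) α₂) ^ (n' + 1)) * ha2
  set S : Polynomial ℂ := β₁ ^ (n' + 1) + Polynomial.C c * β₂ ^ (n' + 1) with hSdef
  have hkey : p * g ^ (n' + 1) * S = q * h ^ m := by
    rw [← hpoly, e₁, e₂]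
    ring
  -- degree of S
  have hdlt : (Polynomial.C c * β₂ ^ (n' + 1)).degree < (β₁ ^ (n' + 1)).degree := by
    rw [Polynomial.degree_C_mul hc]
    apply Polynomial.degree_lt_degree
    rw [Polynomial.natDegree_pow, Polynomial.natDegree_pow]
    exact (Nat.mul_lt_mul_left (Nat.succ_pos n')).mpr hβdeg
  have hdS : S.degree = (β₁ ^ (n' + 1)).degree := by
    rw [hSdef]
    exact Polynomial.degree_add_eq_left_of_degree_lt hdlt
  have hSne : S ≠ 0 := by
    intro h0
    rw [h0, Polynomial.degree_zero] at hdS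
    exact pow_ne_zero _ hβ₁ (Polynomial.degree_eq_bot.mp hdS.symm)
  have hdSn : S.natDegree = (n' + 1) * β₁.natDegree := by
    rw [Polynomial.natDegree_eq_of_degree_eq hdS, Polynomial.natDegree_pow]
  -- per-root bound
  have key : ∀ z ∈ S.roots.toFinset,
      S.rootMultiplicity z ≤ 2 * W.rootMultiplicity z + (p * q * g).rootMultiplicity z := by
    intro z hz
    have hzroot : S.IsRoot z := Polynomial.isRoot_of_mem_roots (Multiset.mem_toFinset.mp hz)
    set k : ℕ := S.rootMultiplicity z with hk
    have hkpos : 1 ≤ k := (Polynomial.rootMultiplicity_pos hSne).mpr hzroot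
    -- z is not a root of β₂
    have hzβ₂ : ¬ β₂.IsRoot z := by
      intro hr
      have h5 : (β₁.eval z) ^ (n' + 1) = 0 := by
        have h6 := hzroot
        simp only [Polynomial.IsRoot, hSdef, Polynomial.eval_add, Polynomial.eval_mul,
          Polynomial.eval_pow, Polynomial.eval_C] at h6
        rw [show β₂.eval z = 0 from hr] at h6
        simpa using h6
      have hβ₁z : β₁.eval z = 0 := pow_eq_zero_iff (Nat.succ_ne_zero n') |>.mp h5
      obtain ⟨u, v, huv⟩ := hcop
      have h7 := congrArg (Polynomial.eval z) huv
      simp only [Polynomial.eval_add, Polynomial.eval_mul, Polynomial.eval_one] at h7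
      rw [hβ₁z, show β₂.eval z = 0 from hr] at h7
      simp at h7
    -- Wronskian divisibility
    have hd1 : (X - Polynomial.C z) ^ (k - 1) ∣ S :=
      dvd_trans (pow_dvd_pow _ (Nat.sub_le k 1)) (Polynomial.pow_rootMultiplicity_dvd S z)
    have hd2 : (X - Polynomial.C z) ^ (k - 1) ∣ derivative S := by
      refine dvd_trans (pow_dvd_pow _ ?_) (Polynomial.pow_rootMultiplicity_dvd _ z)
      exact Polynomial.rootMultiplicity_sub_one_le_derivative_rootMultiplicity S z
    have hid : Polynomial.C ((n' : ℂ) + 1) * derivative β₁ * S - β₁ * derivative S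
        = Polynomial.C c * Polynomial.C ((n' : ℂ) + 1) * β₂ ^ n' * W := by
      rw [hSdef, hWdef]
      simp only [derivative_add, derivative_C_mul, Polynomial.derivative_pow_succ]
      push_cast
      ring
    have hd3 : (X - Polynomial.C z) ^ (k - 1) ∣
        Polynomial.C c * Polynomial.C ((n' : ℂ) + 1) * β₂ ^ n' * W := by
      rw [← hid]
      exact dvd_sub (hd1.mul_left _) (hd2.mul_left _)
    have hcz : IsCoprime ((X - Polynomial.C z) ^ (k - 1))
        (Polynomial.C c * Polynomial.C ((n' : ℂ) + 1) * β₂ ^ n') := by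
      apply IsCoprime.pow_left
      refine IsCoprime.mul_right (IsCoprime.mul_right ?_ ?_) ?_
      · exact isCoprime_of_isUnit_right (Polynomial.isUnit_C.mpr (Ne.isUnit hc))
      · exact isCoprime_of_isUnit_right (Polynomial.isUnit_C.mpr
          (Ne.isUnit (Nat.cast_add_one_ne_zero n')))
      · exact IsCoprime.pow_right (((Polynomial.irreducible_X_sub_C z).coprime_iff_not_dvd).mpr
          (fun hdd => hzβ₂ (Polynomial.dvd_iff_isRoot.mp hdd)))
    have hdW : (X - Polynomial.C z) ^ (k - 1) ∣ W := hcz.dvd_of_dvd_mul_left hd3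
    have hkW : k - 1 ≤ W.rootMultiplicity z := (Polynomial.le_rootMultiplicity_iff hW).mpr hdW
    -- valuation bookkeeping via the main polynomial identity
    have hmult := congrArg (Polynomial.rootMultiplicity z) hkey
    rw [Polynomial.rootMultiplicity_mul
          (mul_ne_zero (mul_ne_zero hpne (pow_ne_zero _ hgne)) hSne),
        Polynomial.rootMultiplicity_mul (mul_ne_zero hpne (pow_ne_zero _ hgne)),
        Polynomial.rootMultiplicity_mul (mul_ne_zero hqne (pow_ne_zero _ hhne)),
        rootMult_pow z g hgne, rootMult_pow z h hhne] at hmult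
    have hpqg : (p * q * g).rootMultiplicity z
        = p.rootMultiplicity z + q.rootMultiplicity z + g.rootMultiplicity z := by
      rw [Polynomial.rootMultiplicity_mul (mul_ne_zero (mul_ne_zero hpne hqne) hgne),
          Polynomial.rootMultiplicity_mul (mul_ne_zero hpne hqne)]
    by_cases hzero : p.rootMultiplicity z = 0 ∧ q.rootMultiplicity z = 0
        ∧ g.rootMultiplicity z = 0
    · obtain ⟨h1, h2, h3⟩ := hzero
      simp only [h1, h2, h3, mul_zero, add_zero, zero_add] at hmult
      have hhz : h.rootMultiplicity z ≠ 0 := by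
        intro h4
        rw [h4, mul_zero] at hmult
        omega
      have h6 : 2 ≤ k := by
        rw [hk, hmult]
        calc 2 = 2 * 1 := rfl
          _ ≤ m * h.rootMultiplicity z := Nat.mul_le_mul hm (Nat.one_le_iff_ne_zero.mpr hhz)
      omega
    · omega
  -- summation
  have hb : S.natDegree ≤ 2 * W.natDegree + (p * q * g).natDegree := by
    rw [natDegree_sum_eq S]
    calc ∑ z ∈ S.roots.toFinset, S.rootMultiplicity z
        ≤ ∑ z ∈ S.roots.toFinset,
            (2 * W.rootMultiplicity z + (p * q * g).rootMultiplicity z) :=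
          Finset.sum_le_sum key
      _ = 2 * (∑ z ∈ S.roots.toFinset, W.rootMultiplicity z)
          + ∑ z ∈ S.roots.toFinset, (p * q * g).rootMultiplicity z := by
          rw [Finset.sum_add_distrib, Finset.mul_sum]
      _ ≤ 2 * W.natDegree + (p * q * g).natDegree := by
          have t1 := sum_rootMult_le (T := S.roots.toFinset) (P := W)
          have t2 := sum_rootMult_le (T := S.roots.toFinset) (P := p * q * g)
          omega
  have hpqgdeg : (p * q * g).natDegree = p.natDegree + q.natDegree + g.natDegree := by
    rw [Polynomial.natDegree_mul (mul_ne_zero hpne hqne) hgne,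
        Polynomial.natDegree_mul hpne hqne]
  have hge : n' + 1 ≤ S.natDegree := by
    rw [hdSn]
    calc n' + 1 = (n' + 1) * 1 := (mul_one _).symm
      _ ≤ (n' + 1) * β₁.natDegree := Nat.mul_le_mul_left _ hβ₁pos
  omega
end

section
/- Let α₁, α₂ ∈ ℂ[x] be polynomials with α₂ ≠ 0 and deg α₁ > deg α₂, and let a₁, a₂ ∈ ℂ(x) be nonzero rational functions whose ratio a₂/a₁ is a (nonzero) complex constant. Define G_n = a₁·α₁ⁿ + a₂·α₂ⁿ ∈ ℂ(x) for n ≥ 0. Then there exists an integer M, depending only on α₁, α₂, a₁, a₂, such that for every integer m ≥ M there is no index n ≥ 0 and no polynomial h ∈ ℂ[x] with deg h ≥ 2 satisfying G_n = h^m (as elements of ℂ(x)). -/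
open Polynomial

namespace Stmt1Aux

lemma ident (β₁ β₂ : Polynomial ℂ) (c : ℂ) (k : ℕ) :
    β₂ * derivative (β₁ ^ (k+1) + C c * β₂ ^ (k+1))
      - C ((k : ℂ) + 1) * derivative β₂ * (β₁ ^ (k+1) + C c * β₂ ^ (k+1))
    = C ((k : ℂ) + 1) * β₁ ^ k * (derivative β₁ * β₂ - β₁ * derivative β₂) := by
  rw [derivative_add, derivative_mul, derivative_C, derivative_pow_succ,
    derivative_pow_succ]
  ring

lemma rm_pow {h : Polynomial ℂ} (hh : h ≠ 0) (m : ℕ) (z : ℂ) :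
    rootMultiplicity z (h ^ m) = m * rootMultiplicity z h := by
  induction m with
  | zero =>
      simp [pow_zero, rootMultiplicity_eq_zero (show ¬(1 : Polynomial ℂ).IsRoot z by
        simp [IsRoot])]
  | succ m ih =>
      rw [pow_succ, rootMultiplicity_mul (mul_ne_zero (pow_ne_zero _ hh) hh), ih]
      ring

lemma key (α₁ α₂ : Polynomial ℂ) (hα₂ : α₂ ≠ 0)
    (hdeg : α₂.natDegree < α₁.natDegree)
    (u v : Polynomial ℂ) (hu : u ≠ 0) (hv : v ≠ 0) (c : ℂ) (hc : c ≠ 0) :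
    ∃ M : ℕ, ∀ m : ℕ, M ≤ m → ∀ n : ℕ, ∀ h : Polynomial ℂ, 2 ≤ h.natDegree →
      u * (α₁ ^ n + C c * α₂ ^ n) ≠ v * h ^ m := by
  have hα₁ : α₁ ≠ 0 := by
    intro h0; rw [h0] at hdeg; simp at hdeg
  -- extract gcd
  obtain ⟨β₁, β₂, hb1, hb2, hcopu⟩ := extract_gcd α₁ α₂
  set g := gcd α₁ α₂ with hgdef
  have hg : g ≠ 0 := by
    intro h0
    exact hα₁ (by rw [hb1, h0, zero_mul])
  have hco : IsCoprime β₁ β₂ := (gcd_isUnit_iff β₁ β₂).1 hcopu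
  have hβ₁ : β₁ ≠ 0 := by intro h0; exact hα₁ (by rw [hb1, h0, mul_zero])
  have hβ₂ : β₂ ≠ 0 := by intro h0; exact hα₂ (by rw [hb2, h0, mul_zero])
  have hdegβ : β₂.natDegree < β₁.natDegree := by
    have e1 : α₁.natDegree = g.natDegree + β₁.natDegree := by
      rw [hb1, natDegree_mul hg hβ₁]
    have e2 : α₂.natDegree = g.natDegree + β₂.natDegree := by
      rw [hb2, natDegree_mul hg hβ₂]
    omega
  have hβ₁pos : 1 ≤ β₁.natDegree := by omega
  -- Wronskian
  set W : Polynomial ℂ := derivative β₁ * β₂ - β₁ * derivative β₂ with hWdef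
  have hW : W ≠ 0 := by
    intro h0
    have hdvd : β₁ ∣ derivative β₁ * β₂ := by
      have : derivative β₁ * β₂ = β₁ * derivative β₂ := by
        have := sub_eq_zero.mp h0; exact this
      exact this ▸ Dvd.intro _ rfl
    have hdvd' : β₁ ∣ derivative β₁ := hco.dvd_of_dvd_mul_right hdvd
    have hd0 : derivative β₁ = 0 := by
      by_contra hne
      have := natDegree_le_of_dvd hdvd' hne
      have := natDegree_derivative_lt (p := β₁) (by omega)
      omega
    have := natDegree_eq_zero_of_derivative_eq_zero hd0
    omega
  set K : ℕ := W.natDegree + 1 with hKdef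
  set D : ℕ := (g * u * v).natDegree with hDdef
  refine ⟨u.natDegree + (K * D + 1) * α₁.natDegree + K + 1, ?_⟩
  intro m hm n h hh heq
  have hh0 : h ≠ 0 := by
    intro h0; rw [h0] at hh; simp at hh
  set P : Polynomial ℂ := α₁ ^ n + C c * α₂ ^ n with hPdef
  have hP : P ≠ 0 := by
    intro h0
    have : v * h ^ m ≠ 0 := mul_ne_zero hv (pow_ne_zero _ hh0)
    rw [← heq, hPdef] at this
    exact this (by rw [← hPdef, h0, mul_zero])
  set Q : Polynomial ℂ := β₁ ^ n + C c * β₂ ^ n with hQdef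
  have hPQ : P = g ^ n * Q := by
    rw [hPdef, hQdef, hb1, hb2, mul_pow, mul_pow]; ring
  by_cases hsmall : n ≤ K * D
  · -- small n: degree bound
    have e : u.natDegree + P.natDegree = v.natDegree + m * h.natDegree := by
      have := congrArg natDegree heq
      rwa [natDegree_mul hu hP, natDegree_mul hv (pow_ne_zero _ hh0),
        natDegree_pow] at this
    have hPd : P.natDegree ≤ n * α₁.natDegree := by
      refine (natDegree_add_le _ _).trans (max_le ?_ ?_)
      · rw [natDegree_pow]
      · refine (natDegree_C_mul_le _ _).trans ?_
        rw [natDegree_pow]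
        exact Nat.mul_le_mul_left n hdeg.le
    have h1 : n * α₁.natDegree ≤ (K * D) * α₁.natDegree :=
      Nat.mul_le_mul_right _ hsmall
    have h2 : (K * D) * α₁.natDegree + α₁.natDegree = (K * D + 1) * α₁.natDegree := by
      ring
    have h3 : 2 * m ≤ m * h.natDegree := by
      calc 2 * m = m * 2 := by ring
      _ ≤ m * h.natDegree := Nat.mul_le_mul_left m hh
    have h4 : 1 ≤ α₁.natDegree := by omega
    omega
  · -- large n
    push_neg at hsmall
    obtain ⟨k, rfl⟩ : ∃ k, n = k + 1 := ⟨n - 1, by omega⟩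
    -- degree of Q
    have hb1n : β₁ ^ (k+1) ≠ 0 := pow_ne_zero _ hβ₁
    have hb2n : C c * β₂ ^ (k+1) ≠ 0 := mul_ne_zero (by simpa using hc) (pow_ne_zero _ hβ₂)
    have hdlt : (C c * β₂ ^ (k+1)).degree < (β₁ ^ (k+1)).degree := by
      rw [degree_C_mul hc, degree_eq_natDegree (pow_ne_zero _ hβ₂),
        degree_eq_natDegree hb1n, natDegree_pow, natDegree_pow]
      exact_mod_cast (Nat.mul_lt_mul_left (Nat.succ_pos k)).mpr hdegβ
    have hQdeg : Q.degree = (β₁ ^ (k+1)).degree := by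
      rw [hQdef]; exact degree_add_eq_left_of_degree_lt hdlt
    have hQ0 : Q ≠ 0 := by
      intro h0
      rw [h0, degree_zero, eq_comm, degree_eq_bot] at hQdeg
      exact hb1n hQdeg
    have hQnat : Q.natDegree = (k+1) * β₁.natDegree := by
      have := natDegree_eq_of_degree_eq_some
        (hQdeg.trans (degree_eq_natDegree hb1n))
      rwa [natDegree_pow] at this
    -- multiplicity bound
    have hmult : ∀ z : ℂ, rootMultiplicity z Q ≤ K := by
      intro z
      by_cases hz : Q.IsRoot z
      · have hβ₁z : ¬β₁.IsRoot z := by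
          intro hr
          have hev : eval z Q = 0 := hz
          rw [hQdef] at hev
          simp only [eval_add, eval_mul, eval_pow, eval_C] at hev
          rw [hr.eq_zero, zero_pow (Nat.succ_ne_zero k), zero_add] at hev
          have : eval z β₂ = 0 := by
            rcases mul_eq_zero.mp hev with h' | h'
            · exact absurd h' hc
            · exact pow_eq_zero_iff (Nat.succ_ne_zero k) |>.mp h'
          obtain ⟨a, b, hab⟩ := hco
          have := congrArg (eval z) hab
          simp [hr.eq_zero, this] at this
          simpa [eval_add, eval_mul, hr.eq_zero, ‹eval z β₂ = 0›] using
            congrArg (eval z) hab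
        set r := rootMultiplicity z Q with hrdef
        have hr1 : 1 ≤ r := (rootMultiplicity_pos hQ0).mpr hz
        obtain ⟨s, hs⟩ : ∃ s, r = s + 1 := ⟨r - 1, by omega⟩
        have d1 : (X - C z) ^ r ∣ Q := pow_rootMultiplicity_dvd Q z
        have dQ : (X - C z) ^ s ∣ Q := (pow_dvd_pow _ (by omega)).trans d1
        have dQ' : (X - C z) ^ s ∣ derivative Q := by
          obtain ⟨S, hS⟩ := d1
          rw [hs] at hS
          refine ⟨C ((s : ℂ) + 1) * S + (X - C z) * derivative S, ?_⟩
          rw [hS, derivative_mul, derivative_pow_succ, derivative_X_sub_C]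
          ring
        have dcomb : (X - C z) ^ s ∣ C ((k : ℂ) + 1) * β₁ ^ k * W := by
          rw [hWdef, ← ident β₁ β₂ c k, ← hQdef]
          exact dvd_sub (Dvd.dvd.mul_left dQ' _) (Dvd.dvd.mul_left dQ _)
        have hunit : IsUnit (C ((k : ℂ) + 1)) :=
          isUnit_C.mpr (isUnit_iff_ne_zero.mpr (Nat.cast_add_one_ne_zero k))
        have dcomb' : (X - C z) ^ s ∣ β₁ ^ k * W := by
          rw [mul_assoc] at dcomb
          exact (hunit.dvd_mul_left).mp dcomb
        have hcopX : IsCoprime ((X - C z) ^ s) (β₁ ^ k) := by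
          refine IsCoprime.pow ?_
          exact (irreducible_X_sub_C z).coprime_iff_not_dvd.mpr
            (by rw [dvd_iff_isRoot]; exact hβ₁z)
        have dW : (X - C z) ^ s ∣ W := hcopX.dvd_of_dvd_mul_left dcomb'
        have : s ≤ W.natDegree := by
          have := natDegree_le_of_dvd dW hW
          rwa [natDegree_pow, natDegree_X_sub_C, mul_one] at this
        omega
      · rw [rootMultiplicity_eq_zero hz]; exact Nat.zero_le _
    -- existence of a good root
    have hB : g * u * v ≠ 0 := mul_ne_zero (mul_ne_zero hg hu) hv
    obtain ⟨z, hzQ, hzB⟩ : ∃ z : ℂ, Q.IsRoot z ∧ ¬(g * u * v).IsRoot z := by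
      by_contra hall
      push_neg at hall
      have hsub : Q.roots.toFinset ⊆ (g * u * v).roots.toFinset := by
        intro z hzmem
        rw [Multiset.mem_toFinset, mem_roots hQ0] at hzmem
        rw [Multiset.mem_toFinset, mem_roots hB]
        exact hall z hzmem
      have hcard : Multiset.card Q.roots = Q.natDegree :=
        splits_iff_card_roots.mp (IsAlgClosed.splits Q)
      classical
      have hsum : Q.natDegree = ∑ z ∈ Q.roots.toFinset, rootMultiplicity z Q := by
        rw [← hcard, ← Multiset.toFinset_sum_count_eq]
        exact Finset.sum_congr rfl fun z _ => count_roots Q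
      have hbound : Q.natDegree ≤ Q.roots.toFinset.card * K := by
        rw [hsum]
        calc ∑ z ∈ Q.roots.toFinset, rootMultiplicity z Q
            ≤ ∑ _z ∈ Q.roots.toFinset, K :=
              Finset.sum_le_sum fun z _ => hmult z
          _ = Q.roots.toFinset.card * K := by rw [Finset.sum_const, smul_eq_mul]
      have hcard2 : Q.roots.toFinset.card ≤ D := by
        calc Q.roots.toFinset.card ≤ (g * u * v).roots.toFinset.card :=
              Finset.card_le_card hsub
          _ ≤ Multiset.card (g * u * v).roots := Multiset.toFinset_card_le _
          _ ≤ D := card_roots' _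
      have : (k+1) * β₁.natDegree ≤ D * K := by
        rw [← hQnat]
        exact hbound.trans (Nat.mul_le_mul_right _ hcard2)
      have h5 : k + 1 ≤ (k+1) * β₁.natDegree := Nat.le_mul_of_pos_right _ (by omega)
      have h6 : D * K = K * D := Nat.mul_comm D K
      omega
    -- root multiplicity comparison
    have hgz : ¬g.IsRoot z := by
      intro hr
      exact hzB (by simp [IsRoot, eval_mul, hr.eq_zero])
    have huz : ¬u.IsRoot z := by
      intro hr
      exact hzB (by simp [IsRoot, eval_mul, hr.eq_zero])
    have hvz : ¬v.IsRoot z := by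
      intro hr
      exact hzB (by simp [IsRoot, eval_mul, hr.eq_zero])
    have heq2 : u * (g ^ (k+1) * Q) = v * h ^ m := by rw [← hPQ]; exact heq
    have hrm := congrArg (rootMultiplicity z) heq2
    rw [rootMultiplicity_mul (by rw [heq2]; exact mul_ne_zero hv (pow_ne_zero _ hh0)),
      rootMultiplicity_mul (mul_ne_zero (pow_ne_zero _ hg) hQ0),
      rootMultiplicity_mul (mul_ne_zero hv (pow_ne_zero _ hh0)),
      rm_pow hg, rm_pow hh0,
      rootMultiplicity_eq_zero hgz, rootMultiplicity_eq_zero huz,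
      rootMultiplicity_eq_zero hvz] at hrm
    simp only [mul_zero, zero_add, add_zero] at hrm
    -- hrm : rootMultiplicity z Q = m * rootMultiplicity z h
    have hrQpos : 1 ≤ rootMultiplicity z Q := (rootMultiplicity_pos hQ0).mpr hzQ
    have hrQle : rootMultiplicity z Q ≤ K := hmult z
    have hKM : K + 1 ≤ m := by omega
    rcases Nat.eq_zero_or_pos (rootMultiplicity z h) with h0 | hpos
    · rw [h0, mul_zero] at hrm; omega
    · have : m ≤ m * rootMultiplicity z h := Nat.le_mul_of_pos_right _ hpos
      omega

end Stmt1Aux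


/-- **Theorem 1 (binary case), exponent-bound form.**
Let `α₁ α₂ ∈ ℂ[x]` with `α₂ ≠ 0` and `deg α₁ > deg α₂`, and let `a₁ a₂ ∈ ℂ(x)` be nonzero
with `a₂ / a₁` a nonzero complex constant. Set `G n = a₁·α₁^n + a₂·α₂^n ∈ ℂ(x)`.
Then there is an integer `M` (depending only on the data) such that for every `m ≥ M`
there is no index `n` and no polynomial `h` with `deg h ≥ 2` satisfying `G n = h^m`. -/
theorem stmt1 (α₁ α₂ : Polynomial ℂ) (hα₂ : α₂ ≠ 0)
    (hdeg : α₂.natDegree < α₁.natDegree)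
    (a₁ a₂ : RatFunc ℂ) (ha₁ : a₁ ≠ 0) (ha₂ : a₂ ≠ 0)
    (c : ℂ) (hc : c ≠ 0) (hratio : a₂ / a₁ = RatFunc.C c) :
    ∃ M : ℕ, ∀ m : ℕ, M ≤ m → ∀ n : ℕ, ∀ h : Polynomial ℂ, 2 ≤ h.natDegree →
      a₁ * (algebraMap (Polynomial ℂ) (RatFunc ℂ) α₁) ^ n +
        a₂ * (algebraMap (Polynomial ℂ) (RatFunc ℂ) α₂) ^ n ≠
      (algebraMap (Polynomial ℂ) (RatFunc ℂ) h) ^ m := by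
  obtain ⟨M, hM⟩ := Stmt1Aux.key α₁ α₂ hα₂ hdeg a₁.num a₁.denom
    (RatFunc.num_ne_zero ha₁) (a₁.denom_ne_zero) c hc
  refine ⟨M, ?_⟩
  intro m hm n h hh heq
  set φ := algebraMap (Polynomial ℂ) (RatFunc ℂ) with hφ
  have ha2eq : a₂ = RatFunc.C c * a₁ := (div_eq_iff ha₁).mp hratio
  have hφv : φ a₁.denom ≠ 0 := RatFunc.algebraMap_ne_zero a₁.denom_ne_zero
  have ha1 : a₁ * φ a₁.denom = φ a₁.num := by
    exact (eq_div_iff hφv).mp (RatFunc.num_div_denom a₁).symm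
  apply hM m hm n h hh
  apply RatFunc.algebraMap_injective
  rw [map_mul, map_mul, map_add, map_mul, map_pow, map_pow, map_pow,
    RatFunc.algebraMap_C]
  rw [ha2eq] at heq
  calc φ a₁.num * (φ α₁ ^ n + RatFunc.C c * φ α₂ ^ n)
      = φ a₁.denom * (a₁ * φ α₁ ^ n + RatFunc.C c * a₁ * φ α₂ ^ n) := by
        rw [← ha1]; ring
    _ = φ a₁.denom * φ h ^ m := by rw [heq]
end

section
/- Let α₁, α₂ ∈ ℂ[x] be polynomials with α₂ ≠ 0 and deg α₁ > deg α₂, and let a₁, a₂ ∈ ℂ(x) be nonzero rational functions whose ratio a₂/a₁ is a (nonzero) complex constant. Write a₁ = p/q in lowest terms with p, q ∈ ℂ[x], and set H(a₁) = max(deg p, deg q) and ν_∞(a₁) = deg q − deg p. If for some n ≥ 0, some integer m ≥ 2, and some polynomial h ∈ ℂ[x] with deg h ≥ 2 one has a₁·α₁ⁿ + a₂·α₂ⁿ = h^m in ℂ(x), then n ≤ (2 + deg α₁)·(3 + deg α₁)·(1 + deg α₁ + deg α₂ + 2·H(a₁)) + |ν_∞(a₁)|. -/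
/-!
Write `a₁ = p / q` and `αᵢ = e βᵢ` with `e = gcd α₁ α₂`, so that clearing denominators gives
`p eⁿ γ = q hᵐ` with `γ = β₁ⁿ + c β₂ⁿ`. Mason–Stothers applied to the coprime sum `β₁ⁿ + c β₂ⁿ = γ`
gives `n deg β₁ < deg β₁ + deg β₂ + deg rad γ`. Since `γ ∣ q hᵐ`, `rad γ ∣ q · rad h`. Splitting
`h = g h'` with `g = gcd(eⁿ, h)`, the factor `gᵐ` is absorbed by `eⁿ` up to the denominator `q`,
so `rad h ∣ rad e · h'` and `m deg h' ≤ deg p + n deg β₁`. With `m ≥ 2` this forces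
`n ≤ 2 (deg β₁ + deg β₂ + deg q + deg e) + deg p`, well inside the stated bound.
-/

open Polynomial UniqueFactorizationMonoid

namespace Polynomial

theorem natDegree_pow_add_C_mul_pow {R : Type*} [Semiring R] [NoZeroDivisors R] {p q : R[X]}
    (hpq : q.natDegree < p.natDegree) (c : R) {n : ℕ} (hn : n ≠ 0) :
    (p ^ n + C c * q ^ n).natDegree = n * p.natDegree := by
  rw [natDegree_add_eq_left_of_natDegree_lt, natDegree_pow]
  calc (C c * q ^ n).natDegree ≤ (q ^ n).natDegree := natDegree_C_mul_le c _
    _ ≤ n * q.natDegree := natDegree_pow_le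
    _ < n * p.natDegree := Nat.mul_lt_mul_of_pos_left hpq (Nat.pos_of_ne_zero hn)
    _ = (p ^ n).natDegree := (natDegree_pow p n).symm

variable {k : Type*} [Field k] [DecidableEq k]

theorem mul_natDegree_lt_natDegree_radical_pow_add_C_mul_pow [CharZero k] {β₁ β₂ : k[X]}
    (hcop : IsCoprime β₁ β₂) (hβ₂ : β₂ ≠ 0) (hdeg : β₂.natDegree < β₁.natDegree)
    {c : k} (hc : c ≠ 0) {n : ℕ} (hn : n ≠ 0) :
    n * β₁.natDegree <
      β₁.natDegree + β₂.natDegree + (radical (β₁ ^ n + C c * β₂ ^ n)).natDegree := by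
  set γ := β₁ ^ n + C c * β₂ ^ n
  have hγ : γ.natDegree = n * β₁.natDegree := natDegree_pow_add_C_mul_pow hdeg c hn
  have hpos : 0 < n * β₁.natDegree := Nat.mul_pos (Nat.pos_of_ne_zero hn) (by omega)
  have hβ₁ : β₁ ≠ 0 := ne_zero_of_natDegree_gt hdeg
  have hcu : IsUnit (C c) := isUnit_C.2 hc.isUnit
  have hγ0 : -γ ≠ 0 := neg_ne_zero.2 (ne_zero_of_natDegree_gt (hγ ▸ hpos))
  have hcopn : IsCoprime (β₁ ^ n) (C c * β₂ ^ n) :=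
    (isCoprime_mul_unit_left_right hcu _ _).2 hcop.pow
  have hrad : radical (β₁ ^ n * (C c * β₂ ^ n) * -γ) ∣ β₁ * β₂ * radical γ :=
    calc radical (β₁ ^ n * (C c * β₂ ^ n) * -γ)
        ∣ radical (β₁ ^ n) * radical (C c * β₂ ^ n) * radical (-γ) :=
          radical_mul_dvd.trans (mul_dvd_mul_right radical_mul_dvd _)
      _ = radical β₁ * radical β₂ * radical γ := by
          rw [radical_pow _ hn, radical_mul_of_isUnit_left hcu, radical_pow _ hn,
            UniqueFactorizationDomain.radical_neg]
      _ ∣ β₁ * β₂ * radical γ :=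
          mul_dvd_mul_right (mul_dvd_mul radical_dvd_self radical_dvd_self) _
  rcases Polynomial.abc (pow_ne_zero n hβ₁) (mul_ne_zero hcu.ne_zero (pow_ne_zero n hβ₂)) hγ0
    hcopn (by ring) with ⟨habc, -⟩ | ⟨hder, -⟩
  · have := natDegree_le_of_dvd hrad (mul_ne_zero (mul_ne_zero hβ₁ hβ₂) radical_ne_zero)
    rw [natDegree_mul (mul_ne_zero hβ₁ hβ₂) radical_ne_zero, natDegree_mul hβ₁ hβ₂] at this
    rw [natDegree_pow] at habc
    omega
  · rw [derivative_eq_zero, natDegree_pow] at hder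
    omega

theorem exists_radical_dvd_radical_mul_of_pow_dvd_mul_pow {e q h : k[X]} {n m : ℕ} (hn : n ≠ 0)
    (hq : q ≠ 0) (hh : h ≠ 0) (hdvd : e ^ n ∣ q * h ^ m) :
    ∃ h', h' ≠ 0 ∧ radical h ∣ radical e * h' ∧
      n * e.natDegree + m * h'.natDegree ≤ q.natDegree + m * h.natDegree := by
  set g := gcd (e ^ n) h
  obtain ⟨h', hgh'⟩ : g ∣ h := gcd_dvd_right _ _
  have hg : g ≠ 0 := left_ne_zero_of_mul (hgh' ▸ hh)
  have hh' : h' ≠ 0 := right_ne_zero_of_mul (hgh' ▸ hh)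
  have hqg : gcd (e ^ n) q ≠ 0 := fun h0 ↦ hq ((gcd_eq_zero_iff _ _).1 h0).2
  have hen : e ^ n ∣ gcd (e ^ n) q * g ^ m :=
    (dvd_gcd dvd_rfl hdvd).trans
      ((gcd_mul_dvd_mul_gcd _ _ _).trans (mul_dvd_mul_left _ gcd_pow_right_dvd_pow_gcd))
  have hdeg_en := natDegree_le_of_dvd hen (mul_ne_zero hqg (pow_ne_zero m hg))
  have hdeg_q := natDegree_le_of_dvd (gcd_dvd_right (e ^ n) q) hq
  rw [natDegree_pow, natDegree_mul hqg (pow_ne_zero m hg), natDegree_pow] at hdeg_en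
  refine ⟨h', hh', ?_, ?_⟩
  · calc radical h ∣ radical g * radical h' := hgh' ▸ radical_mul_dvd
      _ ∣ radical e * h' := by
        refine mul_dvd_mul ?_ radical_dvd_self
        rw [← radical_pow e hn]
        exact radical_dvd_radical (gcd_dvd_left _ _)
          (ne_zero_of_dvd_ne_zero (mul_ne_zero hq (pow_ne_zero m hh)) hdvd)
  · rw [hgh', natDegree_mul hg hh', Nat.mul_add]
    omega

theorem exponent_le_of_mul_pow_mul_eq_mul_pow [CharZero k] {e β₁ β₂ p q h : k[X]} {c : k}
    {n m : ℕ} (hcop : IsCoprime β₁ β₂) (hβ₂ : β₂ ≠ 0) (hdeg : β₂.natDegree < β₁.natDegree)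
    (hc : c ≠ 0) (hm : 2 ≤ m) (hp : p ≠ 0) (hq : q ≠ 0) (he : e ≠ 0)
    (heq : p * e ^ n * (β₁ ^ n + C c * β₂ ^ n) = q * h ^ m) :
    n ≤ 2 * (β₁.natDegree + β₂.natDegree + q.natDegree + e.natDegree) + p.natDegree := by
  rcases eq_or_ne n 0 with rfl | hn
  · exact Nat.zero_le _
  set γ := β₁ ^ n + C c * β₂ ^ n
  have hγdeg : γ.natDegree = n * β₁.natDegree := natDegree_pow_add_C_mul_pow hdeg c hn
  have hγ : γ ≠ 0 := ne_zero_of_natDegree_gt (n := 0) (by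
    rw [hγdeg]; exact Nat.mul_pos (Nat.pos_of_ne_zero hn) (by omega))
  have hlhs : p * e ^ n * γ ≠ 0 := mul_ne_zero (mul_ne_zero hp (pow_ne_zero n he)) hγ
  have hh : h ≠ 0 := fun h0 ↦ hlhs (by rw [heq, h0, zero_pow (by omega), mul_zero])
  have hdegs :
      p.natDegree + n * e.natDegree + n * β₁.natDegree = q.natDegree + m * h.natDegree := by
    have := congrArg natDegree heq
    rwa [natDegree_mul (mul_ne_zero hp (pow_ne_zero n he)) hγ,
      natDegree_mul hp (pow_ne_zero n he), natDegree_mul hq (pow_ne_zero m hh), natDegree_pow,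
      natDegree_pow, hγdeg] at this
  obtain ⟨h', hh', hrad_h, hdeg_h'⟩ :=
    exists_radical_dvd_radical_mul_of_pow_dvd_mul_pow (e := e) hn hq hh
      ⟨p * γ, by rw [← heq]; ring⟩
  have hrad_γ : radical γ ∣ q * (radical e * h') :=
    calc radical γ ∣ radical (q * h ^ m) :=
          radical_dvd_radical (Dvd.intro_left _ heq) (heq ▸ hlhs)
      _ ∣ radical q * radical h := radical_mul_dvd.trans (by rw [radical_pow h (by omega)])
      _ ∣ q * (radical e * h') := mul_dvd_mul radical_dvd_self hrad_h
  have hdeg_rad_γ : (radical γ).natDegree ≤ q.natDegree + e.natDegree + h'.natDegree := by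
    have := natDegree_le_of_dvd hrad_γ (mul_ne_zero hq (mul_ne_zero radical_ne_zero hh'))
    rw [natDegree_mul hq (mul_ne_zero radical_ne_zero hh'),
      natDegree_mul radical_ne_zero hh'] at this
    have := natDegree_le_of_dvd (radical_dvd_self (a := e)) he
    omega
  have hms : n * β₁.natDegree < β₁.natDegree + β₂.natDegree + (radical γ).natDegree :=
    mul_natDegree_lt_natDegree_radical_pow_add_C_mul_pow hcop hβ₂ hdeg hc hn
  have hm_h' : 2 * h'.natDegree ≤ m * h'.natDegree := Nat.mul_le_mul_right _ hm
  have hn_le : n ≤ n * β₁.natDegree := Nat.le_mul_of_pos_right n (by omega)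
  omega

end Polynomial

/-- `a₁.num / a₁.denom` is the lowest-terms representation of `a₁`, and
`ν_∞(a₁) = -a₁.intDegree`. -/
theorem stmt2_general (α₁ α₂ : Polynomial ℂ) (hα₂ : α₂ ≠ 0)
    (hdeg : α₂.natDegree < α₁.natDegree)
    (a₁ a₂ : RatFunc ℂ) (ha₁ : a₁ ≠ 0)
    (c : ℂ) (hc : c ≠ 0) (hratio : a₂ / a₁ = RatFunc.C c)
    (n m : ℕ) (hm : 2 ≤ m) (h : Polynomial ℂ)
    (heq : a₁ * (algebraMap (Polynomial ℂ) (RatFunc ℂ) α₁) ^ n +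
        a₂ * (algebraMap (Polynomial ℂ) (RatFunc ℂ) α₂) ^ n =
      (algebraMap (Polynomial ℂ) (RatFunc ℂ) h) ^ m) :
    n ≤ (2 + α₁.natDegree) * (3 + α₁.natDegree) *
          (1 + α₁.natDegree + α₂.natDegree +
            2 * max a₁.num.natDegree a₁.denom.natDegree)
        + a₁.intDegree.natAbs := by
  rcases eq_or_ne n 0 with rfl | hn
  · exact Nat.zero_le _
  have hα : α₁ ^ n + C c * α₂ ^ n ≠ 0 := ne_zero_of_natDegree_gt (n := 0) (by
    rw [natDegree_pow_add_C_mul_pow hdeg c hn]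
    exact Nat.mul_pos (Nat.pos_of_ne_zero hn) (by omega))
  have hclear : a₁.num * (α₁ ^ n + C c * α₂ ^ n) = h ^ m * a₁.denom := by
    rw [RatFunc.num_mul_eq_mul_denom_iff hα, eq_div_iff (RatFunc.algebraMap_ne_zero hα),
      map_pow, ← heq, (div_eq_iff ha₁).1 hratio, map_add, map_mul, map_pow, map_pow,
      RatFunc.algebraMap_C]
    ring
  obtain ⟨β₁, β₂, hαβ₁, hαβ₂, hunit⟩ := extract_gcd α₁ α₂
  set e := gcd α₁ α₂
  have he : e ≠ 0 := left_ne_zero_of_mul (hαβ₂ ▸ hα₂)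
  have hβ₁ : β₁ ≠ 0 := right_ne_zero_of_mul (hαβ₁ ▸ ne_zero_of_natDegree_gt hdeg)
  have hβ₂ : β₂ ≠ 0 := right_ne_zero_of_mul (hαβ₂ ▸ hα₂)
  have hd₁ : α₁.natDegree = e.natDegree + β₁.natDegree := by rw [hαβ₁, natDegree_mul he hβ₁]
  have hd₂ : α₂.natDegree = e.natDegree + β₂.natDegree := by rw [hαβ₂, natDegree_mul he hβ₂]
  have hkey : a₁.num * e ^ n * (β₁ ^ n + C c * β₂ ^ n) = a₁.denom * h ^ m := by
    rw [hαβ₁, hαβ₂] at hclear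
    linear_combination hclear
  have hbound := exponent_le_of_mul_pow_mul_eq_mul_pow ((gcd_isUnit_iff β₁ β₂).1 hunit) hβ₂
    (by omega) hc hm (RatFunc.num_ne_zero ha₁) a₁.denom_ne_zero he hkey
  have hnum := le_max_left a₁.num.natDegree a₁.denom.natDegree
  have hdenom := le_max_right a₁.num.natDegree a₁.denom.natDegree
  calc n ≤ 6 * (1 + α₁.natDegree + α₂.natDegree +
          2 * max a₁.num.natDegree a₁.denom.natDegree) := by omega
    _ ≤ _ := Nat.mul_le_mul_right _ (by nlinarith)
    _ ≤ _ := Nat.le_add_right _ _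

/-- **Explicit index bound in the binary case.**
With `a₁` written in lowest terms as `a₁.num / a₁.denom` (this is the reduced representation
provided by `RatFunc`), the height is `H(a₁) = max (deg num) (deg denom)` and
`ν_∞(a₁) = deg denom − deg num = −intDegree a₁`.  If `a₁·α₁^n + a₂·α₂^n = h^m` for some
`m ≥ 2` and `deg h ≥ 2`, then
`n ≤ (2 + deg α₁)(3 + deg α₁)(1 + deg α₁ + deg α₂ + 2·H(a₁)) + |ν_∞(a₁)|`. -/
theorem stmt2 (α₁ α₂ : Polynomial ℂ) (hα₂ : α₂ ≠ 0)
    (hdeg : α₂.natDegree < α₁.natDegree)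
    (a₁ a₂ : RatFunc ℂ) (ha₁ : a₁ ≠ 0) (ha₂ : a₂ ≠ 0)
    (c : ℂ) (hc : c ≠ 0) (hratio : a₂ / a₁ = RatFunc.C c)
    (n m : ℕ) (hm : 2 ≤ m) (h : Polynomial ℂ) (hh : 2 ≤ h.natDegree)
    (heq : a₁ * (algebraMap (Polynomial ℂ) (RatFunc ℂ) α₁) ^ n +
        a₂ * (algebraMap (Polynomial ℂ) (RatFunc ℂ) α₂) ^ n =
      (algebraMap (Polynomial ℂ) (RatFunc ℂ) h) ^ m) :
    n ≤ (2 + α₁.natDegree) * (3 + α₁.natDegree) *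
          (1 + α₁.natDegree + α₂.natDegree +
            2 * max a₁.num.natDegree a₁.denom.natDegree)
        + a₁.intDegree.natAbs :=
  stmt2_general α₁ α₂ hα₂ hdeg a₁ a₂ ha₁ c hc hratio n m hm h heq
end

section
/- Let d ≥ 3, let a₁, …, a_d ∈ ℂ be nonzero complex constants, and let α₁, …, α_d ∈ ℂ[x] be nonzero polynomials satisfying deg α₁ > deg α₂ > deg α₃ ≥ deg α₄ ≥ ⋯ ≥ deg α_d and the non-degeneracy condition that α_i/α_j is not a (nonzero) complex constant for all i ≠ j. Define G_n = a₁·α₁ⁿ + ⋯ + a_d·α_dⁿ ∈ ℂ[x] for n ≥ 0. Then there exists an integer M, depending only on the a_i and α_i, such that for every integer m ≥ M there is no index n ≥ 0 and no polynomial h ∈ ℂ[x] with deg h ≥ 2 satisfying G_n = h^m. -/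
open Polynomial Finset

/-- Leading coefficient and degree of the derivative of a complex polynomial of
positive degree. -/
lemma aux_deriv_lc (p : Polynomial ℂ) (hp : p.natDegree ≠ 0) :
    (Polynomial.derivative p).natDegree = p.natDegree - 1 ∧
      (Polynomial.derivative p).leadingCoeff = (p.natDegree : ℂ) * p.leadingCoeff := by
  have hp0 : p ≠ 0 := fun h0 => hp (by simp [h0])
  have hcast : ((p.natDegree - 1 : ℕ) : ℂ) + 1 = (p.natDegree : ℂ) := by
    rw [Nat.cast_sub (by omega : 1 ≤ p.natDegree)]; push_cast; ring
  have h1 : (Polynomial.derivative p).coeff (p.natDegree - 1)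
      = (p.natDegree : ℂ) * p.leadingCoeff := by
    rw [coeff_derivative, show p.natDegree - 1 + 1 = p.natDegree by omega, hcast]
    rw [mul_comm]; rfl
  have h1ne : (Polynomial.derivative p).coeff (p.natDegree - 1) ≠ 0 := by
    rw [h1]
    exact mul_ne_zero (Nat.cast_ne_zero.mpr hp) (leadingCoeff_ne_zero.mpr hp0)
  have hdeg : (Polynomial.derivative p).natDegree = p.natDegree - 1 :=
    le_antisymm (natDegree_derivative_le p) (le_natDegree_of_ne_zero h1ne)
  exact ⟨hdeg, by rw [leadingCoeff, hdeg, h1]⟩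

/-- **Theorem 2 (general case).**
Let `d ≥ 3`, `a i ∈ ℂ` nonzero constants, `α i ∈ ℂ[x]` nonzero polynomials with
`deg α₀ > deg α₁ > deg α₂ ≥ deg α₃ ≥ ⋯` (0-based indexing) and `α i / α j ∉ ℂ*` for `i ≠ j`.
Set `G n = ∑ i, a i · (α i)^n`.  Then there is an `M` such that for all `m ≥ M` there is no
index `n` and no polynomial `h` with `deg h ≥ 2` satisfying `G n = h^m`. -/
theorem stmt3 (d : ℕ) (hd : 3 ≤ d)
    (a : Fin d → ℂ) (ha : ∀ i, a i ≠ 0)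
    (α : Fin d → Polynomial ℂ) (hα : ∀ i, α i ≠ 0)
    (hdeg12 : (α ⟨1, by omega⟩).natDegree < (α ⟨0, by omega⟩).natDegree)
    (hdeg23 : (α ⟨2, by omega⟩).natDegree < (α ⟨1, by omega⟩).natDegree)
    (hdegmono : ∀ i j : Fin d, 2 ≤ (i : ℕ) → i ≤ j → (α j).natDegree ≤ (α i).natDegree)
    (hnondeg : ∀ i j : Fin d, i ≠ j → ∀ c : ℂ, c ≠ 0 → α i ≠ Polynomial.C c * α j) :
    ∃ M : ℕ, ∀ m : ℕ, M ≤ m → ∀ n : ℕ, ∀ h : Polynomial ℂ, 2 ≤ h.natDegree →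
      ∑ i, Polynomial.C (a i) * (α i) ^ n ≠ h ^ m := by
  have hd0 : (0 : ℕ) < d := by omega
  have hd1 : (1 : ℕ) < d := by omega
  have hd2 : (2 : ℕ) < d := by omega
  set i0 : Fin d := ⟨0, hd0⟩ with hi0
  set i1 : Fin d := ⟨1, hd1⟩ with hi1
  set i2 : Fin d := ⟨2, hd2⟩ with hi2
  set A : Polynomial ℂ := α i0 with hAdef
  set B : Polynomial ℂ := α i1 with hBdef
  set dA : ℕ := A.natDegree with hdAdef
  set dB : ℕ := B.natDegree with hdBdef
  have hBA : dB < dA := hdeg12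
  have h2B : (α i2).natDegree < dB := hdeg23
  have hdB1 : 1 ≤ dB := by omega
  have hdA2 : 2 ≤ dA := by omega
  have hterm : ∀ i : Fin d, i ≠ i0 → (α i).natDegree ≤ dB := by
    intro i hi
    rcases Nat.lt_or_ge (i : ℕ) 2 with h2 | h2
    · have h01 : (i : ℕ) = 0 ∨ (i : ℕ) = 1 := by omega
      rcases h01 with h01 | h01
      · exact absurd (Fin.val_injective (show (i : ℕ) = (i0 : ℕ) from h01)) hi
      · have : i = i1 := Fin.val_injective (show (i : ℕ) = (i1 : ℕ) from h01)
        rw [this]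
    · exact le_trans (hdegmono i2 i le_rfl h2) (le_of_lt h2B)
  have hterm2 : ∀ i : Fin d, i ≠ i0 → i ≠ i1 → (α i).natDegree < dB := by
    intro i hi hi'
    have h2 : 2 ≤ (i : ℕ) := by
      rcases Nat.lt_or_ge (i : ℕ) 2 with h2 | h2
      · have h01 : (i : ℕ) = 0 ∨ (i : ℕ) = 1 := by omega
        rcases h01 with h01 | h01
        · exact absurd (Fin.val_injective (show (i : ℕ) = (i0 : ℕ) from h01)) hi
        · exact absurd (Fin.val_injective (show (i : ℕ) = (i1 : ℕ) from h01)) hi'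
      · exact h2
    exact lt_of_le_of_lt (hdegmono i2 i le_rfl h2) h2B
  refine ⟨dA * dA, ?_⟩
  intro m hm n h he hG
  have hh0 : h ≠ 0 := fun hh => by simp [hh] at he
  have hm1 : 1 ≤ m := by nlinarith
  rcases Nat.eq_zero_or_pos n with hn0 | hn1
  · subst hn0
    have h1 : (∑ i, Polynomial.C (a i) * α i ^ 0).natDegree = 0 := by
      apply Nat.eq_zero_of_le_zero
      apply natDegree_sum_le_of_forall_le
      intro i _
      simp
    rw [hG, natDegree_pow] at h1
    rcases Nat.mul_eq_zero.mp h1 with h' | h' <;> omega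
  -- main case n ≥ 1
  have hmulBA : n * dB + n ≤ n * dA := by
    calc n * dB + n = n * (dB + 1) := by ring
    _ ≤ n * dA := Nat.mul_le_mul le_rfl (by omega)
  set P : Polynomial ℂ := ∑ i ∈ Finset.univ.erase i0, Polynomial.C (a i) * α i ^ n with hPdef
  have hsplit0 : ∑ i, Polynomial.C (a i) * α i ^ n = Polynomial.C (a i0) * A ^ n + P :=
    (Finset.add_sum_erase _ _ (Finset.mem_univ i0)).symm
  have hi10 : i1 ≠ i0 := by simp [hi0, hi1, Fin.ext_iff]
  set Q : Polynomial ℂ := ∑ i ∈ (Finset.univ.erase i0).erase i1, Polynomial.C (a i) * α i ^ n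
    with hQdef
  have hsplit1 : P = Polynomial.C (a i1) * B ^ n + Q :=
    (Finset.add_sum_erase _ _ (Finset.mem_erase.mpr ⟨hi10, Finset.mem_univ i1⟩)).symm
  have hPle : P.natDegree ≤ n * dB := by
    apply natDegree_sum_le_of_forall_le
    intro i hi
    refine le_trans (natDegree_C_mul_le _ _) ?_
    rw [natDegree_pow]
    exact Nat.mul_le_mul le_rfl (hterm i (Finset.mem_erase.mp hi).1)
  have hQlt : Q.natDegree < n * dB := by
    have h1 : Q.natDegree ≤ n * (dB - 1) := by
      apply natDegree_sum_le_of_forall_le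
      intro i hi
      refine le_trans (natDegree_C_mul_le _ _) ?_
      rw [natDegree_pow]
      have := hterm2 i (Finset.mem_erase.mp (Finset.mem_erase.mp hi).2).1
        (Finset.mem_erase.mp hi).1
      exact Nat.mul_le_mul le_rfl (by omega)
    have h2 : n * (dB - 1) + n = n * dB := by
      rw [← Nat.mul_succ]
      congr 1
      omega
    omega
  have hPcoeff : P.coeff (n * dB) = a i1 * B.leadingCoeff ^ n := by
    rw [hsplit1, coeff_add, coeff_C_mul, coeff_eq_zero_of_natDegree_lt hQlt,
      coeff_pow_mul_natDegree, add_zero]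
  have hPcoeff_ne : P.coeff (n * dB) ≠ 0 := by
    rw [hPcoeff]
    exact mul_ne_zero (ha i1) (pow_ne_zero _ (leadingCoeff_ne_zero.mpr (hα i1)))
  have hPdeg : P.natDegree = n * dB :=
    le_antisymm hPle (le_natDegree_of_ne_zero hPcoeff_ne)
  have hPne : P ≠ 0 := fun h0 => hPcoeff_ne (by simp [h0])
  have hCA : (Polynomial.C (a i0) * A ^ n).natDegree = n * dA := by
    rw [natDegree_C_mul (ha i0), natDegree_pow]
  have hGdeg : (∑ i, Polynomial.C (a i) * α i ^ n).natDegree = n * dA := by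
    rw [hsplit0, natDegree_add_eq_left_of_natDegree_lt, hCA]
    rw [hCA, hPdeg]
    omega
  have hme : m * h.natDegree = n * dA := by
    rw [← hGdeg, hG, natDegree_pow]
  have hPsub : P = h ^ m - Polynomial.C (a i0) * A ^ n := by
    rw [← hG, hsplit0]; ring
  set m' : ℕ := m - 1 with hm'def
  have hm' : m = m' + 1 := by omega
  set n' : ℕ := n - 1 with hn'def
  have hn' : n = n' + 1 := by omega
  have hd' : Polynomial.derivative P =
      Polynomial.C (m : ℂ) * h ^ m' * Polynomial.derivative h -
        Polynomial.C (a i0) * (Polynomial.C (n : ℂ) * A ^ n' * Polynomial.derivative A) := by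
    rw [hPsub, derivative_sub, derivative_pow, derivative_C_mul, derivative_pow]
  set W : Polynomial ℂ :=
    Polynomial.C (m : ℂ) * Polynomial.derivative h * A -
      Polynomial.C (n : ℂ) * Polynomial.derivative A * h with hWdef
  have key : h ^ m' * W =
      Polynomial.derivative P * A - Polynomial.C (n : ℂ) * Polynomial.derivative A * P := by
    rw [hWdef, hd', hPsub, hm', hn']
    ring
  by_cases hW : W = 0
  · -- degenerate case: compare leading coefficients of P' A = n A' P
    have h0 : Polynomial.derivative P * A =
        Polynomial.C (n : ℂ) * Polynomial.derivative A * P := by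
      have h1 : Polynomial.derivative P * A -
          Polynomial.C (n : ℂ) * Polynomial.derivative A * P = 0 := by
        rw [← key, hW, mul_zero]
      exact sub_eq_zero.mp h1
    have hPd1 : P.natDegree ≠ 0 := by
      rw [hPdeg]
      exact Nat.mul_ne_zero (by omega) (by omega)
    have hAd1 : A.natDegree ≠ 0 := by omega
    obtain ⟨hdPdeg, hlcP⟩ := aux_deriv_lc P hPd1
    obtain ⟨hdAdeg, hlcA⟩ := aux_deriv_lc A hAd1
    have hlc := congrArg leadingCoeff h0
    rw [leadingCoeff_mul, leadingCoeff_mul, leadingCoeff_mul, leadingCoeff_C] at hlc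
    rw [hlcP, hlcA, hPdeg] at hlc
    have hAlc : A.leadingCoeff ≠ 0 := leadingCoeff_ne_zero.mpr (hα i0)
    have hPlc : P.leadingCoeff ≠ 0 := leadingCoeff_ne_zero.mpr hPne
    have h9 : (((n * dB : ℕ) : ℂ) - (n : ℂ) * (dA : ℂ)) *
        (P.leadingCoeff * A.leadingCoeff) = 0 := by
      linear_combination hlc
    rcases mul_eq_zero.mp h9 with h9 | h9
    · have h10 : ((n * dB : ℕ) : ℂ) = ((n * dA : ℕ) : ℂ) := by
        push_cast
        push_cast at h9
        linear_combination h9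
      have h11 : n * dB = n * dA := Nat.cast_injective h10
      omega
    · exact absurd h9 (mul_ne_zero hPlc hAlc)
  · -- main case: degree bound forces m to be small
    have hLdeg : (h ^ m' * W).natDegree = m' * h.natDegree + W.natDegree := by
      rw [natDegree_mul (pow_ne_zero _ hh0) hW, natDegree_pow]
    have hRdeg : (Polynomial.derivative P * A -
        Polynomial.C (n : ℂ) * Polynomial.derivative A * P).natDegree ≤ n * dB + dA - 1 := by
      refine le_trans (natDegree_sub_le _ _) (max_le ?_ ?_)
      · refine le_trans (natDegree_mul_le) ?_
        have h1 := natDegree_derivative_le P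
        rw [hPdeg] at h1
        have hnb : 1 ≤ n * dB := by
          calc 1 = 1 * 1 := by ring
          _ ≤ n * dB := Nat.mul_le_mul hn1 hdB1
        omega
      · refine le_trans (natDegree_mul_le) ?_
        refine le_trans (Nat.add_le_add (natDegree_mul_le) le_rfl) ?_
        have h1 := natDegree_derivative_le A
        have hC : (Polynomial.C (n : ℂ)).natDegree = 0 := natDegree_C _
        rw [hC, hPdeg]
        omega
    have hbound : m' * h.natDegree + 1 ≤ n * dB + dA := by
      rw [← key, hLdeg] at hRdeg
      have hnb : 1 ≤ n * dB := by
        calc 1 = 1 * 1 := by ring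
        _ ≤ n * dB := Nat.mul_le_mul hn1 hdB1
      omega
    -- final arithmetic contradiction over ℤ
    set e : ℕ := h.natDegree with hedef
    have hme' : (m' + 1) * e = n * dA := by rw [← hm']; exact hme
    have H1 : (m' : ℤ) * e + 1 ≤ (n : ℤ) * dB + dA := by exact_mod_cast hbound
    have H2 : ((m' : ℤ) + 1) * e = (n : ℤ) * dA := by exact_mod_cast hme'
    have H3 : (dB : ℤ) + 1 ≤ (dA : ℤ) := by exact_mod_cast hBA
    have H4 : (2 : ℤ) ≤ (e : ℤ) := by exact_mod_cast he
    have H5 : (2 : ℤ) ≤ (dA : ℤ) := by exact_mod_cast hdA2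
    have H6 : (1 : ℤ) ≤ (n : ℤ) := by exact_mod_cast hn1
    have H7 : (dA : ℤ) * dA ≤ (m' : ℤ) + 1 := by
      have : dA * dA ≤ m' + 1 := by omega
      exact_mod_cast this
    have z1 : ((m' : ℤ) * e + 1) * dA ≤ ((n : ℤ) * dB + dA) * dA :=
      mul_le_mul_of_nonneg_right H1 (by linarith)
    have z2 : ((dB : ℤ) + 1) * ((n : ℤ) * dA) ≤ (dA : ℤ) * ((n : ℤ) * dA) :=
      mul_le_mul_of_nonneg_right H3 (by positivity)
    have z3 : ((m' : ℤ) + 1) * e * dA = (n : ℤ) * dA * dA := by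
      linear_combination (dA : ℤ) * H2
    have z4 : (dA : ℤ) * dA * e ≤ ((m' : ℤ) + 1) * e :=
      mul_le_mul_of_nonneg_right H7 (by linarith)
    have z5 : (0 : ℤ) ≤ ((e : ℤ) - 2) * ((dA : ℤ) * dA - dA) := by
      apply mul_nonneg (by linarith)
      have h12 : (dA : ℤ) * 1 ≤ (dA : ℤ) * dA :=
        mul_le_mul_of_nonneg_left (by linarith) (by linarith)
      linarith
    have z6 : (0 : ℤ) ≤ ((dA : ℤ) - 1) * ((dA : ℤ) - 1) := mul_self_nonneg _
    linarith [z1, z2, z3, z4, z5, z6, H2, H5]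
end

section
/- Let β₁, β₂ ∈ ℂ[x] be polynomials with β₂ ≠ 0 and deg β₁ > deg β₂, let λ ∈ ℂ be a nonzero constant, let m ≥ 2 and L ≥ 1 be integers, and let d₀, d₁, …, d_{L−1} ∈ ℂ be any complex constants. Then β₁^{m(L−1)}·(β₁ + λ·β₂) ≠ β₁·(d₀·β₁^{L−1} + d₁·β₁^{L−2}·β₂ + ⋯ + d_{L−1}·β₂^{L−1})^m in ℂ[x]. -/
/-!
Put `t = β₂ / β₁` in `ℂ(x)` and `P = ∑ dᵢ Xⁱ`. Dividing the identity by `β₁ ^ (m(L-1)+1)` turns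
it into `1 + λ t = P(t) ^ m`. As `deg β₂ < deg β₁`, `t` is not a constant, hence transcendental
over the algebraically closed field `ℂ`, so `1 + λ X = P ^ m` in `ℂ[X]`: impossible, because a
polynomial of degree one is not an `m`-th power for `m ≥ 2`.
-/

open Polynomial

theorem Polynomial.one_add_C_mul_X_ne_pow {R : Type*} [CommRing R] [IsDomain R] {c : R}
    (hc : c ≠ 0) {m : ℕ} (hm : 2 ≤ m) (P : R[X]) : 1 + C c * X ≠ P ^ m := fun h ↦ by
  have hdeg := congrArg natDegree h
  rw [natDegree_pow, add_comm, natDegree_add_eq_left_of_natDegree_lt,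
    natDegree_C_mul_X c hc] at hdeg
  · exact hm.not_gt (Nat.eq_one_of_mul_eq_one_right hdeg.symm ▸ one_lt_two)
  · simp [natDegree_C_mul_X c hc]

theorem RatFunc.transcendental_div_of_natDegree_lt {k : Type*} [Field k] [IsAlgClosed k]
    {a b : k[X]} (hb : b ≠ 0) (hab : b.natDegree < a.natDegree) :
    Transcendental k (algebraMap k[X] (RatFunc k) b / algebraMap k[X] (RatFunc k) a) := by
  intro halg
  obtain ⟨c, hc⟩ := minpoly.mem_range_of_degree_eq_one k _ <|
    IsAlgClosed.degree_eq_one_of_irreducible k (minpoly.irreducible halg.isIntegral)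
  have hbca : b = Polynomial.C c * a := by
    apply RatFunc.algebraMap_injective k
    rw [map_mul, ← algebraMap_eq, ← IsScalarTower.algebraMap_apply, hc, div_mul_cancel₀ _
      ((map_ne_zero_iff _ (RatFunc.algebraMap_injective k)).2 (ne_zero_of_natDegree_gt hab))]
  have hc0 : c ≠ 0 := by
    rintro rfl
    simp [hb] at hbca
  rw [hbca, natDegree_C_mul hc0] at hab
  exact hab.false

theorem Finset.sum_mul_pow_mul_pow_eq_pow_mul_sum {K : Type*} [Field K] {u : K} (hu : u ≠ 0)
    (v : K) {L : ℕ} (d : Fin L → K) :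
    ∑ i : Fin L, d i * u ^ (L - 1 - i) * v ^ (i : ℕ) =
      u ^ (L - 1) * ∑ i : Fin L, d i * (v / u) ^ (i : ℕ) := by
  rw [Finset.mul_sum]
  refine Finset.sum_congr rfl fun i _ ↦ ?_
  rw [div_pow, ← Nat.sub_add_cancel (Nat.le_sub_one_of_lt i.isLt), pow_add, Nat.add_sub_cancel]
  field_simp

theorem one_add_mul_div_eq_pow_of_eq_mul_pow {K : Type*} [Field K] {u : K} (hu : u ≠ 0)
    (v c : K) {m L : ℕ} (d : Fin L → K)
    (h : u ^ (m * (L - 1)) * (u + c * v) =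
      u * (∑ i : Fin L, d i * u ^ (L - 1 - i) * v ^ (i : ℕ)) ^ m) :
    1 + c * (v / u) = (∑ i : Fin L, d i * (v / u) ^ (i : ℕ)) ^ m := by
  rw [Finset.sum_mul_pow_mul_pow_eq_pow_mul_sum hu, mul_pow, ← pow_mul, mul_comm (L - 1),
    ← mul_assoc, ← pow_succ', pow_succ, mul_assoc] at h
  rw [← mul_right_inj' hu, ← mul_left_cancel₀ (pow_ne_zero _ hu) h]
  field_simp

theorem stmt8_general (β₁ β₂ : Polynomial ℂ) (hβ₂ : β₂ ≠ 0)
    (hdeg : β₂.natDegree < β₁.natDegree)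
    (lam : ℂ) (hlam : lam ≠ 0) (m L : ℕ) (hm : 2 ≤ m)
    (dd : Fin L → ℂ) :
    β₁ ^ (m * (L - 1)) * (β₁ + Polynomial.C lam * β₂) ≠
      β₁ * (∑ i : Fin L,
        Polynomial.C (dd i) * β₁ ^ (L - 1 - (i : ℕ)) * β₂ ^ (i : ℕ)) ^ m := by
  intro h
  have hu : algebraMap ℂ[X] (RatFunc ℂ) β₁ ≠ 0 :=
    (map_ne_zero_iff _ (RatFunc.algebraMap_injective ℂ)).2 (ne_zero_of_natDegree_gt hdeg)
  have hdehom := one_add_mul_div_eq_pow_of_eq_mul_pow hu _ _ _ <| by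
    simpa only [map_mul, map_pow, map_add, map_sum, ← algebraMap_eq,
      ← IsScalarTower.algebraMap_apply] using congrArg (algebraMap ℂ[X] (RatFunc ℂ)) h
  refine one_add_C_mul_X_ne_pow hlam hm (∑ i : Fin L, C (dd i) * X ^ (i : ℕ))
    (transcendental_iff_injective.1 (RatFunc.transcendental_div_of_natDegree_lt hβ₂ hdeg) ?_)
  simpa using hdehom

/-- **Impossibility of the linearly dependent case (binary setting).**
Let `β₁ β₂ ∈ ℂ[x]` with `β₂ ≠ 0` and `deg β₁ > deg β₂`, let `λ ≠ 0`, `m ≥ 2`, `L ≥ 1` and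
`d₀, …, d_{L-1} ∈ ℂ`.  Then
`β₁^{m(L−1)}·(β₁ + λ·β₂) ≠ β₁·(∑_{i<L} d_i·β₁^{L−1−i}·β₂^i)^m`. -/
theorem stmt8 (β₁ β₂ : Polynomial ℂ) (hβ₂ : β₂ ≠ 0)
    (hdeg : β₂.natDegree < β₁.natDegree)
    (lam : ℂ) (hlam : lam ≠ 0) (m L : ℕ) (hm : 2 ≤ m) (hL : 1 ≤ L)
    (dd : Fin L → ℂ) :
    β₁ ^ (m * (L - 1)) * (β₁ + Polynomial.C lam * β₂) ≠
      β₁ * (∑ i : Fin L,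
        Polynomial.C (dd i) * β₁ ^ (L - 1 - (i : ℕ)) * β₂ ^ (i : ℕ)) ^ m :=
  stmt8_general β₁ β₂ hβ₂ hdeg lam hlam m L hm dd
end
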